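/- Performance difference lower bound (adaptation of Pirotta et al. Corollary 3.6 with worst-case Q bound): for any two stationary policies π_I and π_E on a finite MDP with rewards in [0,1] and any starting distribution μ, J_μ^{π_I} − J_μ^{π_E} ≥ (1/(1-γ)) ∑_s d_μ^{π_E}(s) ∑_a π_I(a|s) A^{π_E}(s,a) − (γ/(2(1-γ)³)) · (max_s ∑_a |π_I(a|s) − π_E(a|s)|)². -/

import Mathlib

/-!
Write `Ā(s) = ∑_a π_I(a|s) A^{π_E}(s,a)` and `d_t^π` for the state distribution at time `t`.
The difference `V^{π_I} - V^{π_E}` solves the Bellman equation of `π_I` with reward `Ā`, so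
`J^{π_I} - J^{π_E} = ∑_t γ^t ⟨d_t^{π_I}, Ā⟩`, whereas the occupancy term equals
`∑_t γ^t ⟨d_t^{π_E}, Ā⟩`. Because `∑_a π_E(a|s) A^{π_E}(s,a) = 0`, we have
`Ā(s) = ∑_a (π_I - π_E)(a|s) Q^{π_E}(s,a)`, and `Q^{π_E}` ranges over an interval of length
`1/(1-γ)`, so `|Ā| ≤ ε/(2(1-γ))` with `ε = max_s ‖π_I(·|s) - π_E(·|s)‖₁`. The two induced kernels
are row-wise `ε`-close in `ℓ¹`, hence `‖d_t^{π_I} - d_t^{π_E}‖₁ ≤ t ε`, and `∑_t t γ^t = γ/(1-γ)²`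
produces the quadratic error term.
-/

/-- State distribution at time t under transition kernel `Ppi` from initial distribution `μ`. -/
noncomputable def stateDist {S : Type*} [Fintype S]
    (Ppi : S → S → ℝ) (μ : S → ℝ) : ℕ → S → ℝ
  | 0 => μ
  | t + 1 => fun s' => ∑ s, stateDist Ppi μ t s * Ppi s s'

/-- γ-discounted (1-γ)-normalized state occupancy measure. -/
noncomputable def occupancy {S : Type*} [Fintype S]
    (Ppi : S → S → ℝ) (μ : S → ℝ) (γ : ℝ) (s : S) : ℝ :=
  (1 - γ) * ∑' t : ℕ, γ ^ t * stateDist Ppi μ t s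

/-- Transition kernel over states induced by policy π. -/
noncomputable def inducedKernel {S A : Type*} [Fintype A]
    (P : S → A → S → ℝ) (π : S → A → ℝ) : S → S → ℝ :=
  fun s s' => ∑ a, π s a * P s a s'

open Finset

section WeightedSums

variable {ι : Type*} [Fintype ι]

theorem abs_sum_mul_le_of_abs_le {w h : ι → ℝ} {C : ℝ} (hh : ∀ i, |h i| ≤ C) :
    |∑ i, w i * h i| ≤ (∑ i, |w i|) * C :=
  calc |∑ i, w i * h i| ≤ ∑ i, |w i| * C := by
        refine (abs_sum_le_sum_abs _ _).trans (sum_le_sum fun i _ => ?_)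
        rw [abs_mul]
        exact mul_le_mul_of_nonneg_left (hh i) (abs_nonneg _)
    _ = (∑ i, |w i|) * C := (sum_mul ..).symm

theorem abs_sum_mul_le_mul_norm (w h : ι → ℝ) : |∑ i, w i * h i| ≤ (∑ i, |w i|) * ‖h‖ :=
  abs_sum_mul_le_of_abs_le fun i => norm_le_pi_norm h i

theorem sum_mul_le_of_forall_le {w v : ι → ℝ} {c : ℝ} (hw0 : ∀ i, 0 ≤ w i)
    (hw1 : ∑ i, w i = 1) (hv : ∀ i, v i ≤ c) : ∑ i, w i * v i ≤ c :=
  calc ∑ i, w i * v i ≤ ∑ i, w i * c :=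
        sum_le_sum fun i _ => mul_le_mul_of_nonneg_left (hv i) (hw0 i)
    _ = c := by rw [← sum_mul, hw1, one_mul]

/-- Since `p - q` has total mass zero, `x` may be recentred at the midpoint of its range. -/
theorem abs_sum_sub_mul_le_half {p q x : ι → ℝ} {M : ℝ} (hpq : ∑ i, p i = ∑ i, q i)
    (hx0 : ∀ i, 0 ≤ x i) (hxM : ∀ i, x i ≤ M) :
    |∑ i, (p i - q i) * x i| ≤ (∑ i, |p i - q i|) * (M / 2) := by
  have hcentre : ∑ i, (p i - q i) * x i = ∑ i, (p i - q i) * (x i - M / 2) := by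
    simp only [mul_sub, sum_sub_distrib, ← sum_mul, hpq, sub_self, zero_mul, sub_zero]
  rw [hcentre]
  exact abs_sum_mul_le_of_abs_le fun i =>
    abs_le.2 ⟨by linarith [hx0 i], by linarith [hxM i]⟩

theorem sum_abs_vecMul_le {κ : Type*} [Fintype κ] {K : ι → κ → ℝ} (hK0 : ∀ i j, 0 ≤ K i j)
    (hK1 : ∀ i, ∑ j, K i j = 1) (v : ι → ℝ) : ∑ j, |∑ i, v i * K i j| ≤ ∑ i, |v i| :=
  calc ∑ j, |∑ i, v i * K i j| ≤ ∑ j, ∑ i, |v i| * K i j :=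
        sum_le_sum fun j _ => (abs_sum_le_sum_abs _ _).trans_eq <|
          sum_congr rfl fun i _ => by rw [abs_mul, abs_of_nonneg (hK0 i j)]
    _ = ∑ i, |v i| := by
        rw [sum_comm]
        simp only [← mul_sum, hK1, mul_one]

theorem sum_mul_sub_eq_sum_sub_mul {p q x : ι → ℝ} {y : ℝ} (hp : ∑ i, p i = 1)
    (hy : y = ∑ i, q i * x i) : ∑ i, p i * (x i - y) = ∑ i, (p i - q i) * x i := by
  simp only [mul_sub, sub_mul, sum_sub_distrib, ← sum_mul, hp, one_mul, hy]

theorem summable_geometric_mul_of_abs_le {γ C : ℝ} (hγ0 : 0 ≤ γ) (hγ1 : γ < 1) {u : ℕ → ℝ}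
    (hu : ∀ t, |u t| ≤ C) : Summable fun t => γ ^ t * u t := by
  refine ((summable_geometric_of_lt_one hγ0 hγ1).mul_right C).of_norm_bounded fun t => ?_
  rw [Real.norm_eq_abs, abs_mul, abs_of_nonneg (pow_nonneg hγ0 t)]
  exact mul_le_mul_of_nonneg_left (hu t) (pow_nonneg hγ0 t)

end WeightedSums

section MarkovChain

variable {S : Type*} [Fintype S] {K K₁ K₂ : S → S → ℝ} {γ : ℝ}

noncomputable def discountedValue (K : S → S → ℝ) (μ : S → ℝ) (γ : ℝ) (h : S → ℝ) : ℝ :=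
  ∑' t : ℕ, γ ^ t * ∑ s, stateDist K μ t s * h s

theorem stateDist_succ_apply (μ : S → ℝ) (t : ℕ) (s' : S) :
    stateDist K μ (t + 1) s' = ∑ s, stateDist K μ t s * K s s' := rfl

theorem sum_stateDist_succ_mul (μ g : S → ℝ) (t : ℕ) :
    ∑ s, stateDist K μ (t + 1) s * g s = ∑ s, stateDist K μ t s * ∑ s', K s s' * g s' := by
  simp only [stateDist_succ_apply, sum_mul, mul_sum]
  rw [sum_comm]
  exact sum_congr rfl fun _ _ => sum_congr rfl fun _ _ => by ring

theorem sum_abs_stateDist_le (hK0 : ∀ s s', 0 ≤ K s s') (hK1 : ∀ s, ∑ s', K s s' = 1)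
    (μ : S → ℝ) (t : ℕ) : ∑ s, |stateDist K μ t s| ≤ ∑ s, |μ s| := by
  induction t with
  | zero => rfl
  | succ t ih => exact (sum_abs_vecMul_le hK0 hK1 _).trans ih

theorem abs_sum_stateDist_mul_le (hK0 : ∀ s s', 0 ≤ K s s') (hK1 : ∀ s, ∑ s', K s s' = 1)
    (μ h : S → ℝ) (t : ℕ) : |∑ s, stateDist K μ t s * h s| ≤ (∑ s, |μ s|) * ‖h‖ :=
  (abs_sum_mul_le_mul_norm _ h).trans <|
    mul_le_mul_of_nonneg_right (sum_abs_stateDist_le hK0 hK1 μ t) (norm_nonneg h)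

theorem summable_discountedValue (hγ0 : 0 ≤ γ) (hγ1 : γ < 1) (hK0 : ∀ s s', 0 ≤ K s s')
    (hK1 : ∀ s, ∑ s', K s s' = 1) (μ h : S → ℝ) :
    Summable fun t => γ ^ t * ∑ s, stateDist K μ t s * h s :=
  summable_geometric_mul_of_abs_le hγ0 hγ1 (abs_sum_stateDist_mul_le hK0 hK1 μ h)

theorem sum_mul_eq_of_fixedPoint {f g : S → ℝ}
    (hg : ∀ s, g s = f s + γ * ∑ s', K s s' * g s') (μ : S → ℝ) (n : ℕ) :
    ∑ s, μ s * g s = ∑ t ∈ range n, γ ^ t * ∑ s, stateDist K μ t s * f s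
      + γ ^ n * ∑ s, stateDist K μ n s * g s := by
  induction n with
  | zero => simp [stateDist]
  | succ n ih =>
    have hstep : ∑ s, stateDist K μ n s * g s = ∑ s, stateDist K μ n s * f s
        + γ * ∑ s, stateDist K μ (n + 1) s * g s := by
      rw [sum_stateDist_succ_mul, mul_sum, ← sum_add_distrib]
      exact sum_congr rfl fun s _ => by rw [hg s]; ring
    rw [ih, hstep, sum_range_succ]
    ring

theorem discountedValue_eq_of_fixedPoint (hγ0 : 0 ≤ γ) (hγ1 : γ < 1)
    (hK0 : ∀ s s', 0 ≤ K s s') (hK1 : ∀ s, ∑ s', K s s' = 1) {f g : S → ℝ}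
    (hg : ∀ s, g s = f s + γ * ∑ s', K s s' * g s') (μ : S → ℝ) :
    discountedValue K μ γ f = ∑ s, μ s * g s := by
  refine (((summable_discountedValue hγ0 hγ1 hK0 hK1 μ f).hasSum_iff_tendsto_nat).2 ?_).tsum_eq
  have htail : Filter.Tendsto (fun n => γ ^ n * ∑ s, stateDist K μ n s * g s)
      Filter.atTop (nhds 0) := by
    refine squeeze_zero_norm (fun n => ?_) (by
      simpa using (tendsto_pow_atTop_nhds_zero_of_lt_one hγ0 hγ1).mul_const ((∑ s, |μ s|) * ‖g‖))
    rw [Real.norm_eq_abs, abs_mul, abs_of_nonneg (pow_nonneg hγ0 n)]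
    exact mul_le_mul_of_nonneg_left (abs_sum_stateDist_mul_le hK0 hK1 μ g n) (pow_nonneg hγ0 n)
  have hlim := (tendsto_const_nhds (x := ∑ s, μ s * g s)).sub htail
  rw [sub_zero] at hlim
  refine hlim.congr fun n => ?_
  rw [sum_mul_eq_of_fixedPoint hg μ n, add_sub_cancel_right]

theorem summable_geometric_mul_stateDist (hγ0 : 0 ≤ γ) (hγ1 : γ < 1)
    (hK0 : ∀ s s', 0 ≤ K s s') (hK1 : ∀ s, ∑ s', K s s' = 1) (μ : S → ℝ) (s : S) :
    Summable fun t => γ ^ t * stateDist K μ t s :=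
  summable_geometric_mul_of_abs_le hγ0 hγ1 fun t =>
    (single_le_sum (fun s _ => abs_nonneg (stateDist K μ t s)) (mem_univ s)).trans
      (sum_abs_stateDist_le hK0 hK1 μ t)

theorem sum_occupancy_mul (hγ0 : 0 ≤ γ) (hγ1 : γ < 1)
    (hK0 : ∀ s s', 0 ≤ K s s') (hK1 : ∀ s, ∑ s', K s s' = 1) (μ h : S → ℝ) :
    ∑ s, occupancy K μ γ s * h s = (1 - γ) * discountedValue K μ γ h := by
  simp only [occupancy, discountedValue, mul_assoc, ← mul_sum, ← tsum_mul_right]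
  rw [← Summable.tsum_finsetSum fun s _ => by
    simpa only [mul_assoc] using
      (summable_geometric_mul_stateDist hγ0 hγ1 hK0 hK1 μ s).mul_right (h s)]
  simp only [mul_sum]

theorem sum_abs_vecMul_sub_le {ε : ℝ} (hε : ∀ s, ∑ s', |K₁ s s' - K₂ s s'| ≤ ε)
    (v : S → ℝ) : ∑ s', |∑ s, v s * (K₁ s s' - K₂ s s')| ≤ (∑ s, |v s|) * ε :=
  calc ∑ s', |∑ s, v s * (K₁ s s' - K₂ s s')|
      ≤ ∑ s', ∑ s, |v s| * |K₁ s s' - K₂ s s'| :=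
        sum_le_sum fun s' _ => (abs_sum_le_sum_abs _ _).trans_eq (by simp only [abs_mul])
    _ = ∑ s, |v s| * ∑ s', |K₁ s s' - K₂ s s'| := by
        rw [sum_comm]
        simp only [mul_sum]
    _ ≤ ∑ s, |v s| * ε := sum_le_sum fun s _ => mul_le_mul_of_nonneg_left (hε s) (abs_nonneg _)
    _ = (∑ s, |v s|) * ε := (sum_mul ..).symm

theorem sum_abs_stateDist_sub_le (hK₁0 : ∀ s s', 0 ≤ K₁ s s') (hK₁1 : ∀ s, ∑ s', K₁ s s' = 1)
    (hK₂0 : ∀ s s', 0 ≤ K₂ s s') (hK₂1 : ∀ s, ∑ s', K₂ s s' = 1) {ε : ℝ} (hε0 : 0 ≤ ε)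
    (hε : ∀ s, ∑ s', |K₁ s s' - K₂ s s'| ≤ ε) (μ : S → ℝ) (t : ℕ) :
    ∑ s, |stateDist K₁ μ t s - stateDist K₂ μ t s| ≤ t * ε * ∑ s, |μ s| := by
  induction t with
  | zero => simp [stateDist]
  | succ t ih =>
    set d₁ := stateDist K₁ μ t
    set d₂ := stateDist K₂ μ t
    have hsplit : ∀ s', stateDist K₁ μ (t + 1) s' - stateDist K₂ μ (t + 1) s'
        = ∑ s, (d₁ s - d₂ s) * K₁ s s' + ∑ s, d₂ s * (K₁ s s' - K₂ s s') := fun s' => by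
      simp only [stateDist_succ_apply, ← sum_add_distrib, ← sum_sub_distrib]
      exact sum_congr rfl fun _ _ => by ring
    have hdrift : (∑ s, |d₂ s|) * ε ≤ ε * ∑ s, |μ s| := by
      rw [mul_comm]
      exact mul_le_mul_of_nonneg_left (sum_abs_stateDist_le hK₂0 hK₂1 μ t) hε0
    calc ∑ s', |stateDist K₁ μ (t + 1) s' - stateDist K₂ μ (t + 1) s'|
        ≤ ∑ s', (|∑ s, (d₁ s - d₂ s) * K₁ s s'| + |∑ s, d₂ s * (K₁ s s' - K₂ s s')|) :=
          sum_le_sum fun s' _ => by rw [hsplit]; exact abs_add_le _ _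
      _ ≤ t * ε * ∑ s, |μ s| + ε * ∑ s, |μ s| := by
          rw [sum_add_distrib]
          exact add_le_add ((sum_abs_vecMul_le hK₁0 hK₁1 _).trans ih)
            ((sum_abs_vecMul_sub_le hε d₂).trans hdrift)
      _ = ((t + 1 : ℕ) : ℝ) * ε * ∑ s, |μ s| := by push_cast; ring

theorem abs_discountedValue_sub_le (hγ0 : 0 ≤ γ) (hγ1 : γ < 1)
    (hK₁0 : ∀ s s', 0 ≤ K₁ s s') (hK₁1 : ∀ s, ∑ s', K₁ s s' = 1)
    (hK₂0 : ∀ s s', 0 ≤ K₂ s s') (hK₂1 : ∀ s, ∑ s', K₂ s s' = 1) {ε : ℝ} (hε0 : 0 ≤ ε)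
    (hε : ∀ s, ∑ s', |K₁ s s' - K₂ s s'| ≤ ε) (μ h : S → ℝ) :
    |discountedValue K₁ μ γ h - discountedValue K₂ μ γ h|
      ≤ γ / (1 - γ) ^ 2 * (ε * (∑ s, |μ s|) * ‖h‖) := by
  rw [discountedValue, discountedValue, ← Real.norm_eq_abs,
    ← (summable_discountedValue hγ0 hγ1 hK₁0 hK₁1 μ h).tsum_sub
      (summable_discountedValue hγ0 hγ1 hK₂0 hK₂1 μ h)]
  have hγ : ‖γ‖ < 1 := by rwa [Real.norm_of_nonneg hγ0]
  refine tsum_of_norm_bounded ((hasSum_coe_mul_geometric_of_norm_lt_one hγ).mul_right _)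
    fun t => ?_
  rw [← mul_sub, ← sum_sub_distrib, norm_mul, Real.norm_of_nonneg (pow_nonneg hγ0 t),
    Real.norm_eq_abs]
  simp only [← sub_mul]
  calc γ ^ t * |∑ s, (stateDist K₁ μ t s - stateDist K₂ μ t s) * h s|
      ≤ γ ^ t * ((∑ s, |stateDist K₁ μ t s - stateDist K₂ μ t s|) * ‖h‖) :=
        mul_le_mul_of_nonneg_left (abs_sum_mul_le_mul_norm _ h) (pow_nonneg hγ0 t)
    _ ≤ γ ^ t * ((t * ε * ∑ s, |μ s|) * ‖h‖) := by
        gcongr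
        exact sum_abs_stateDist_sub_le hK₁0 hK₁1 hK₂0 hK₂1 hε0 hε μ t
    _ = t * γ ^ t * (ε * (∑ s, |μ s|) * ‖h‖) := by ring

theorem le_div_of_fixedPoint (hγ0 : 0 ≤ γ) (hγ1 : γ < 1)
    (hK0 : ∀ s s', 0 ≤ K s s') (hK1 : ∀ s, ∑ s', K s s' = 1) {f g : S → ℝ} {c : ℝ}
    (hg : ∀ s, g s = f s + γ * ∑ s', K s s' * g s') (hf : ∀ s, f s ≤ c) (s : S) :
    g s ≤ c / (1 - γ) := by
  obtain ⟨m, -, hm⟩ := exists_max_image univ g ⟨s, mem_univ s⟩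
  have hKg : ∑ s', K m s' * g s' ≤ g m :=
    sum_mul_le_of_forall_le (hK0 m) (hK1 m) fun s' => hm s' (mem_univ s')
  have hgm : g m * (1 - γ) ≤ c := by
    linarith [hg m, hf m, mul_le_mul_of_nonneg_left hKg hγ0]
  rw [le_div_iff₀ (sub_pos.2 hγ1)]
  nlinarith [hm s (mem_univ s)]

theorem nonneg_of_fixedPoint (hγ0 : 0 ≤ γ) (hγ1 : γ < 1)
    (hK0 : ∀ s s', 0 ≤ K s s') (hK1 : ∀ s, ∑ s', K s s' = 1) {f g : S → ℝ}
    (hg : ∀ s, g s = f s + γ * ∑ s', K s s' * g s') (hf : ∀ s, 0 ≤ f s) (s : S) : 0 ≤ g s := by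
  have hneg : ∀ s, -g s = -f s + γ * ∑ s', K s s' * -g s' := fun s => by
    simp only [hg s, mul_neg, sum_neg_distrib]
    ring
  simpa using le_div_of_fixedPoint hγ0 hγ1 hK0 hK1 hneg (fun s => neg_nonpos.2 (hf s)) s

end MarkovChain

section Policy

variable {S A : Type*} [Fintype A] {P : S → A → S → ℝ} {R : S → A → ℝ} {γ : ℝ}
  {π π₁ π₂ : S → A → ℝ}

theorem inducedKernel_nonneg (hP0 : ∀ s a s', 0 ≤ P s a s') (hπ0 : ∀ s a, 0 ≤ π s a)
    (s s' : S) : 0 ≤ inducedKernel P π s s' :=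
  sum_nonneg fun a _ => mul_nonneg (hπ0 s a) (hP0 s a s')

variable [Fintype S]

theorem sum_inducedKernel_mul (π : S → A → ℝ) (g : S → ℝ) (s : S) :
    ∑ s', inducedKernel P π s s' * g s' = ∑ a, π s a * ∑ s', P s a s' * g s' := by
  simp only [inducedKernel, sum_mul, mul_sum]
  rw [sum_comm]
  exact sum_congr rfl fun _ _ => sum_congr rfl fun _ _ => mul_assoc _ _ _

theorem sum_inducedKernel (hP1 : ∀ s a, ∑ s', P s a s' = 1) (hπ1 : ∀ s, ∑ a, π s a = 1)
    (s : S) : ∑ s', inducedKernel P π s s' = 1 := by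
  simpa [hP1, hπ1] using sum_inducedKernel_mul (P := P) π (fun _ => 1) s

theorem sum_abs_inducedKernel_sub_le (hP0 : ∀ s a s', 0 ≤ P s a s')
    (hP1 : ∀ s a, ∑ s', P s a s' = 1) (s : S) :
    ∑ s', |inducedKernel P π₁ s s' - inducedKernel P π₂ s s'| ≤ ∑ a, |π₁ s a - π₂ s a| := by
  simpa only [inducedKernel, sub_mul, sum_sub_distrib] using
    sum_abs_vecMul_le (hP0 s) (hP1 s) fun a => π₁ s a - π₂ s a

theorem sum_mul_backup_eq (π : S → A → ℝ) (V : S → ℝ) (s : S) :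
    ∑ a, π s a * (R s a + γ * ∑ s', P s a s' * V s')
      = ∑ a, π s a * R s a + γ * ∑ s', inducedKernel P π s s' * V s' := by
  rw [sum_inducedKernel_mul, mul_sum, ← sum_add_distrib]
  exact sum_congr rfl fun a _ => by ring

theorem backup_mem_Icc (hγ0 : 0 ≤ γ) (hγ1 : γ < 1) (hP0 : ∀ s a s', 0 ≤ P s a s')
    (hP1 : ∀ s a, ∑ s', P s a s' = 1) (hR0 : ∀ s a, 0 ≤ R s a) (hR1 : ∀ s a, R s a ≤ 1)
    (hπ0 : ∀ s a, 0 ≤ π s a) (hπ1 : ∀ s, ∑ a, π s a = 1) {V : S → ℝ}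
    (hV : ∀ s, V s = ∑ a, π s a * (R s a + γ * ∑ s', P s a s' * V s')) (s : S) (a : A) :
    R s a + γ * ∑ s', P s a s' * V s' ∈ Set.Icc 0 (1 / (1 - γ)) := by
  have hfix : ∀ s, V s = ∑ a, π s a * R s a + γ * ∑ s', inducedKernel P π s s' * V s' :=
    fun s => (hV s).trans (sum_mul_backup_eq π V s)
  have hK0 := inducedKernel_nonneg hP0 hπ0
  have hK1 := sum_inducedKernel hP1 hπ1
  have hV0 : ∀ s, 0 ≤ V s := nonneg_of_fixedPoint hγ0 hγ1 hK0 hK1 hfix fun s =>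
    sum_nonneg fun a _ => mul_nonneg (hπ0 s a) (hR0 s a)
  have hV1 : ∀ s, V s ≤ 1 / (1 - γ) := le_div_of_fixedPoint hγ0 hγ1 hK0 hK1 hfix fun s =>
    sum_mul_le_of_forall_le (hπ0 s) (hπ1 s) (hR1 s)
  have hPV0 : 0 ≤ ∑ s', P s a s' * V s' := sum_nonneg fun s' _ => mul_nonneg (hP0 s a s') (hV0 s')
  have hPV1 : ∑ s', P s a s' * V s' ≤ 1 / (1 - γ) :=
    sum_mul_le_of_forall_le (hP0 s a) (hP1 s a) hV1
  have hγ : 1 + γ * (1 / (1 - γ)) = 1 / (1 - γ) := by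
    field_simp [(sub_pos.2 hγ1).ne']
    ring
  exact ⟨add_nonneg (hR0 s a) (mul_nonneg hγ0 hPV0),
    by linarith [hR1 s a, mul_le_mul_of_nonneg_left hPV1 hγ0]⟩

theorem value_sub_eq (hπ1 : ∀ s, ∑ a, π s a = 1) {V : S → ℝ}
    (hV : ∀ s, V s = ∑ a, π s a * (R s a + γ * ∑ s', P s a s' * V s')) (W : S → ℝ) (s : S) :
    V s - W s = ∑ a, π s a * (R s a + γ * ∑ s', P s a s' * W s' - W s)
      + γ * ∑ s', inducedKernel P π s s' * (V s' - W s') := by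
  have hW : ∑ a, π s a * (R s a + γ * ∑ s', P s a s' * W s' - W s)
      = ∑ a, π s a * (R s a + γ * ∑ s', P s a s' * W s') - W s := by
    simp only [mul_sub, sum_sub_distrib, ← sum_mul, hπ1, one_mul]
  rw [hW, hV s, sum_mul_backup_eq, sum_mul_backup_eq]
  simp only [mul_sub, sum_sub_distrib]
  ring

theorem sum_mul_value_sub_eq_discountedValue (hγ0 : 0 ≤ γ) (hγ1 : γ < 1)
    (hP0 : ∀ s a s', 0 ≤ P s a s') (hP1 : ∀ s a, ∑ s', P s a s' = 1)
    (hπ0 : ∀ s a, 0 ≤ π s a) (hπ1 : ∀ s, ∑ a, π s a = 1) {V : S → ℝ}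
    (hV : ∀ s, V s = ∑ a, π s a * (R s a + γ * ∑ s', P s a s' * V s')) (W μ : S → ℝ) :
    ∑ s, μ s * V s - ∑ s, μ s * W s = discountedValue (inducedKernel P π) μ γ
      (fun s => ∑ a, π s a * (R s a + γ * ∑ s', P s a s' * W s' - W s)) := by
  rw [← sum_sub_distrib]
  simp only [← mul_sub]
  exact (discountedValue_eq_of_fixedPoint hγ0 hγ1 (inducedKernel_nonneg hP0 hπ0)
    (sum_inducedKernel hP1 hπ1) (value_sub_eq hπ1 hV W) μ).symm

theorem abs_sum_mul_advantage_le (hγ0 : 0 ≤ γ) (hγ1 : γ < 1) (hP0 : ∀ s a s', 0 ≤ P s a s')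
    (hP1 : ∀ s a, ∑ s', P s a s' = 1) (hR0 : ∀ s a, 0 ≤ R s a) (hR1 : ∀ s a, R s a ≤ 1)
    (hπ₁1 : ∀ s, ∑ a, π₁ s a = 1) (hπ₂0 : ∀ s a, 0 ≤ π₂ s a) (hπ₂1 : ∀ s, ∑ a, π₂ s a = 1)
    {V : S → ℝ} (hV : ∀ s, V s = ∑ a, π₂ s a * (R s a + γ * ∑ s', P s a s' * V s')) (s : S) :
    |∑ a, π₁ s a * (R s a + γ * ∑ s', P s a s' * V s' - V s)|
      ≤ (∑ a, |π₁ s a - π₂ s a|) * (1 / (1 - γ) / 2) := by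
  have hQ := backup_mem_Icc hγ0 hγ1 hP0 hP1 hR0 hR1 hπ₂0 hπ₂1 hV s
  rw [sum_mul_sub_eq_sum_sub_mul (hπ₁1 s) (hV s)]
  exact abs_sum_sub_mul_le_half (by rw [hπ₁1, hπ₂1]) (fun a => (hQ a).1) fun a => (hQ a).2

end Policy

theorem performance_difference_lower_bound_general
    {S A : Type*} [Fintype S] [Fintype A] [Nonempty S]
    (P : S → A → S → ℝ) (R : S → A → ℝ) (γ : ℝ)
    (hγ0 : 0 ≤ γ) (hγ1 : γ < 1)
    (hP0 : ∀ s a s', 0 ≤ P s a s') (hP1 : ∀ s a, ∑ s', P s a s' = 1)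
    (hR0 : ∀ s a, 0 ≤ R s a) (hR1 : ∀ s a, R s a ≤ 1)
    (πI πE : S → A → ℝ)
    (hπI0 : ∀ s a, 0 ≤ πI s a) (hπI1 : ∀ s, ∑ a, πI s a = 1)
    (hπE0 : ∀ s a, 0 ≤ πE s a) (hπE1 : ∀ s, ∑ a, πE s a = 1)
    (μ : S → ℝ) (hμ0 : ∀ s, 0 ≤ μ s) (hμ1 : ∑ s, μ s = 1)
    (VI VE : S → ℝ)
    (hVI : ∀ s, VI s = ∑ a, πI s a * (R s a + γ * ∑ s', P s a s' * VI s'))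
    (hVE : ∀ s, VE s = ∑ a, πE s a * (R s a + γ * ∑ s', P s a s' * VE s'))
    (QE : S → A → ℝ) (hQE : ∀ s a, QE s a = R s a + γ * ∑ s', P s a s' * VE s')
    (AdvE : S → A → ℝ) (hAdvE : ∀ s a, AdvE s a = QE s a - VE s) :
    (∑ s, μ s * VI s) - (∑ s, μ s * VE s) ≥
      (1 / (1 - γ)) *
          (∑ s, occupancy (inducedKernel P πE) μ γ s * ∑ a, πI s a * AdvE s a) -
        (γ / (2 * (1 - γ) ^ 3)) *
          (Finset.univ.sup' Finset.univ_nonempty fun s => ∑ a, |πI s a - πE s a|) ^ 2 := by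
  simp only [hAdvE, hQE]
  set ε := Finset.univ.sup' Finset.univ_nonempty fun s => ∑ a, |πI s a - πE s a|
  set Abar : S → ℝ := fun s => ∑ a, πI s a * (R s a + γ * ∑ s', P s a s' * VE s' - VE s)
  have hε : ∀ s, ∑ a, |πI s a - πE s a| ≤ ε := fun s =>
    le_sup' (fun s => ∑ a, |πI s a - πE s a|) (mem_univ s)
  have hε0 : 0 ≤ ε := (sum_nonneg fun _ _ => abs_nonneg _).trans (hε (Classical.arbitrary S))
  have hAbar : ‖Abar‖ ≤ ε * (1 / (1 - γ) / 2) :=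
    (pi_norm_le_iff_of_nonneg (by positivity)).2 fun s =>
      (abs_sum_mul_advantage_le hγ0 hγ1 hP0 hP1 hR0 hR1 hπI1 hπE0 hπE1 hVE s).trans
        (mul_le_mul_of_nonneg_right (hε s) (by positivity))
  have hμ : ∑ s, |μ s| = 1 := by simp only [abs_of_nonneg (hμ0 _), hμ1]
  have hgap := abs_discountedValue_sub_le hγ0 hγ1 (inducedKernel_nonneg hP0 hπI0)
    (sum_inducedKernel hP1 hπI1) (inducedKernel_nonneg hP0 hπE0) (sum_inducedKernel hP1 hπE1)
    hε0 (fun s => (sum_abs_inducedKernel_sub_le hP0 hP1 s).trans (hε s)) μ Abar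
  have hbound : γ / (1 - γ) ^ 2 * (ε * (∑ s, |μ s|) * ‖Abar‖) ≤ γ / (2 * (1 - γ) ^ 3) * ε ^ 2 :=
    calc γ / (1 - γ) ^ 2 * (ε * (∑ s, |μ s|) * ‖Abar‖)
        ≤ γ / (1 - γ) ^ 2 * (ε * 1 * (ε * (1 / (1 - γ) / 2))) := by rw [hμ]; gcongr
      _ = γ / (2 * (1 - γ) ^ 3) * ε ^ 2 := by field_simp [(sub_pos.2 hγ1).ne']
  rw [ge_iff_le, sum_mul_value_sub_eq_discountedValue hγ0 hγ1 hP0 hP1 hπI0 hπI1 hVI VE μ,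
    sum_occupancy_mul hγ0 hγ1 (inducedKernel_nonneg hP0 hπE0) (sum_inducedKernel hP1 hπE1),
    ← mul_assoc, one_div_mul_cancel (sub_pos.2 hγ1).ne', one_mul]
  linarith [neg_abs_le (discountedValue (inducedKernel P πI) μ γ Abar
    - discountedValue (inducedKernel P πE) μ γ Abar)]

/-- Performance difference lower bound (Pirotta et al., Cor. 3.6 with
worst-case Q bound): J_μ^{π_I} − J_μ^{π_E} ≥
(1/(1-γ)) ∑_s d_μ^{π_E}(s) ∑_a π_I(a|s) A^{π_E}(s,a)
− (γ/(2(1-γ)³)) (max_s ∑_a |π_I(a|s) − π_E(a|s)|)². -/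
theorem performance_difference_lower_bound
    {S A : Type*} [Fintype S] [Fintype A] [Nonempty S] [Nonempty A]
    (P : S → A → S → ℝ) (R : S → A → ℝ) (γ : ℝ)
    (hγ0 : 0 ≤ γ) (hγ1 : γ < 1)
    (hP0 : ∀ s a s', 0 ≤ P s a s') (hP1 : ∀ s a, ∑ s', P s a s' = 1)
    (hR0 : ∀ s a, 0 ≤ R s a) (hR1 : ∀ s a, R s a ≤ 1)
    (πI πE : S → A → ℝ)
    (hπI0 : ∀ s a, 0 ≤ πI s a) (hπI1 : ∀ s, ∑ a, πI s a = 1)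
    (hπE0 : ∀ s a, 0 ≤ πE s a) (hπE1 : ∀ s, ∑ a, πE s a = 1)
    (μ : S → ℝ) (hμ0 : ∀ s, 0 ≤ μ s) (hμ1 : ∑ s, μ s = 1)
    (VI VE : S → ℝ)
    (hVI : ∀ s, VI s = ∑ a, πI s a * (R s a + γ * ∑ s', P s a s' * VI s'))
    (hVE : ∀ s, VE s = ∑ a, πE s a * (R s a + γ * ∑ s', P s a s' * VE s'))
    (QE : S → A → ℝ) (hQE : ∀ s a, QE s a = R s a + γ * ∑ s', P s a s' * VE s')
    (AdvE : S → A → ℝ) (hAdvE : ∀ s a, AdvE s a = QE s a - VE s) :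
    (∑ s, μ s * VI s) - (∑ s, μ s * VE s) ≥
      (1 / (1 - γ)) *
          (∑ s, occupancy (inducedKernel P πE) μ γ s * ∑ a, πI s a * AdvE s a) -
        (γ / (2 * (1 - γ) ^ 3)) *
          (Finset.univ.sup' Finset.univ_nonempty fun s => ∑ a, |πI s a - πE s a|) ^ 2 :=
  performance_difference_lower_bound_general P R γ hγ0 hγ1 hP0 hP1 hR0 hR1 πI πE hπI0 hπI1 hπE0 hπE1
    μ hμ0 hμ1 VI VE hVI hVE QE hQE AdvE hAdvE
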